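/- Let Ω ⊆ ℝ³ be a bounded open set and let ℓ, ψ, θ : Ω → ℝ be twice continuously differentiable functions forming an orthogonal coordinate system on Ω (∇ℓ · ∇ψ = ∇ℓ · ∇θ = ∇ψ · ∇θ = 0 with Jacobian h = ∇ℓ · (∇ψ × ∇θ) nonvanishing on Ω), with |∇ℓ| = |∇ψ| on Ω and |∇θ| = |α| on Ω for a continuous function α : Ω → ℝ. Let f : ℝ → ℝ be continuous and let F : ℝ → ℝ be an antiderivative of f (F' = f). Then the vector fields w = cos(F(θ)) ∇ψ + sin(F(θ)) ∇ℓ and w* = sin(F(θ)) ∇ψ + cos(F(θ)) ∇ℓ satisfy curl w = σ|α| f(θ) w and curl w* = −σ|α| f(θ) w* on Ω, where σ(x) = h(x)/|h(x)| is the sign of the Jacobian; in particular both are Beltrami fields in Ω. -/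

import Mathlib

noncomputable section

abbrev R3 : Type := Fin 3 → ℝ

/-- Euclidean dot product on ℝ³. -/
def dot3 (u v : R3) : ℝ := u 0 * v 0 + u 1 * v 1 + u 2 * v 2

/-- Cross product on ℝ³. -/
def cross3 (u v : R3) : R3 :=
  ![u 1 * v 2 - u 2 * v 1, u 2 * v 0 - u 0 * v 2, u 0 * v 1 - u 1 * v 0]

/-- Euclidean norm on ℝ³. -/
def norm3 (u : R3) : ℝ := Real.sqrt (dot3 u u)

/-- Partial derivative of a scalar field in the `i`-th coordinate direction. -/
def pd (i : Fin 3) (f : R3 → ℝ) (x : R3) : ℝ := fderiv ℝ f x (Pi.single i 1)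

/-- Gradient of a scalar field. -/
def grad3 (f : R3 → ℝ) (x : R3) : R3 := fun i => pd i f x

/-- Curl of a vector field. -/
def curl3 (w : R3 → R3) (x : R3) : R3 :=
  ![pd 1 (fun y => w y 2) x - pd 2 (fun y => w y 1) x,
    pd 2 (fun y => w y 0) x - pd 0 (fun y => w y 2) x,
    pd 0 (fun y => w y 1) x - pd 1 (fun y => w y 0) x]

/-- Divergence of a vector field. -/
def div3 (w : R3 → R3) (x : R3) : ℝ :=
  pd 0 (fun y => w y 0) x + pd 1 (fun y => w y 1) x + pd 2 (fun y => w y 2) x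

/-- Laplacian of a scalar field. -/
def lap3 (f : R3 → ℝ) (x : R3) : ℝ := div3 (grad3 f) x

/-! On `Ω` the gradients `∇ℓ, ∇ψ, ∇θ` form an orthogonal frame with `|∇ℓ| = |∇ψ|`, so
`∇ψ × ∇θ = k ∇ℓ` and `∇θ × ∇ℓ = k ∇ψ` with `k = σ |∇θ| = σ |α|` (the Gram determinant gives
`h² = |∇ℓ|⁴ |∇θ|²`). Gradients of `C²` functions are curl-free, so
`curl (g(θ) ∇u) = g'(θ) ∇θ × ∇u`; for `g = cos ∘ F` and `g = sin ∘ F` the chain rule brings out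
the factor `f(θ)`, and the two terms of `curl w` recombine into `k f(θ) w`, those of `curl w*`
into `-k f(θ) w*`. -/

open Matrix Filter Topology

theorem dot3_eq_dotProduct (u v : R3) : dot3 u v = u ⬝ᵥ v := by
  simp [dot3, dotProduct, Fin.sum_univ_three]

theorem cross3_eq_crossProduct (u v : R3) : cross3 u v = u ⨯₃ v := rfl

theorem cross3_anticomm (u v : R3) : cross3 u v = -cross3 v u := by
  simp only [cross3_eq_crossProduct, cross_anticomm]

theorem triple_product_sq_of_orthogonal {R : Type*} [CommRing R] {a b c : Fin 3 → R}
    (hab : a ⬝ᵥ b = 0) (hac : a ⬝ᵥ c = 0) (hbc : b ⬝ᵥ c = 0) :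
    (a ⬝ᵥ b ⨯₃ c) ^ 2 = (a ⬝ᵥ a) * (b ⬝ᵥ b) * (c ⬝ᵥ c) := by
  -- the Gram determinant identity `det [a b c] ^ 2 = det (Gram a b c)`
  have gram : (a ⬝ᵥ b ⨯₃ c) ^ 2 = (a ⬝ᵥ a) * (b ⬝ᵥ b) * (c ⬝ᵥ c)
      + 2 * (a ⬝ᵥ b) * (b ⬝ᵥ c) * (a ⬝ᵥ c) - (a ⬝ᵥ a) * (b ⬝ᵥ c) ^ 2
      - (b ⬝ᵥ b) * (a ⬝ᵥ c) ^ 2 - (c ⬝ᵥ c) * (a ⬝ᵥ b) ^ 2 := by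
    simp only [cross_apply, vec3_dotProduct]
    simp only [Fin.isValue, Nat.succ_eq_add_one, Nat.reduceAdd, cons_val_zero, cons_val_one,
      cons_val]
    ring
  rw [gram, hab, hac, hbc]
  ring

theorem cross_eq_smul_of_orthogonal {K : Type*} [Field K] {a b c : Fin 3 → K}
    (hab : a ⬝ᵥ b = 0) (hac : a ⬝ᵥ c = 0) (ha : a ⬝ᵥ a ≠ 0) :
    b ⨯₃ c = (a ⬝ᵥ b ⨯₃ c / a ⬝ᵥ a) • a := by
  have hpar : a ⨯₃ (b ⨯₃ c) = 0 := by
    rw [cross_cross_eq_smul_sub_smul', dotProduct_comm b, hab, hac, zero_smul, zero_smul, sub_zero]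
  have key : (a ⬝ᵥ a) • (b ⨯₃ c) = (a ⬝ᵥ b ⨯₃ c) • a := by
    have := cross_cross_eq_smul_sub_smul' a a (b ⨯₃ c)
    rw [hpar, map_zero, eq_comm, sub_eq_zero] at this
    exact this.symm
  rw [div_eq_inv_mul, mul_smul, ← key, smul_smul, inv_mul_cancel₀ ha, one_smul]

theorem dotProduct_self_nonneg {R n : Type*} [Ring R] [LinearOrder R] [IsStrictOrderedRing R]
    [Fintype n] (v : n → R) : 0 ≤ v ⬝ᵥ v :=
  Finset.sum_nonneg fun i _ => mul_self_nonneg (v i)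

theorem div_dotProduct_self_eq_sign_mul_sqrt {a b c : Fin 3 → ℝ}
    (hab : a ⬝ᵥ b = 0) (hac : a ⬝ᵥ c = 0) (hbc : b ⬝ᵥ c = 0) (hba : b ⬝ᵥ b = a ⬝ᵥ a)
    (hh : a ⬝ᵥ b ⨯₃ c ≠ 0) :
    a ⬝ᵥ b ⨯₃ c / a ⬝ᵥ a = a ⬝ᵥ b ⨯₃ c / |a ⬝ᵥ b ⨯₃ c| * √(c ⬝ᵥ c) := by
  set h := a ⬝ᵥ b ⨯₃ c
  have habs : |h| = a ⬝ᵥ a * √(c ⬝ᵥ c) := by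
    rw [← Real.sqrt_sq_eq_abs, triple_product_sq_of_orthogonal hab hac hbc, hba, ← sq,
      Real.sqrt_mul (sq_nonneg _), Real.sqrt_sq (dotProduct_self_nonneg a)]
  have hc : √(c ⬝ᵥ c) ≠ 0 := by
    intro hc
    rw [hc, mul_zero, abs_eq_zero] at habs
    exact hh habs
  rw [habs, div_mul_eq_mul_div, mul_div_mul_right _ _ hc]

theorem cross3_eq_smul_of_orthogonal {a b c : R3}
    (hab : dot3 a b = 0) (hac : dot3 a c = 0) (hbc : dot3 b c = 0) (hn : norm3 a = norm3 b)
    (hh : dot3 a (cross3 b c) ≠ 0) :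
    cross3 b c = (dot3 a (cross3 b c) / |dot3 a (cross3 b c)| * norm3 c) • a ∧
      cross3 c a = (dot3 a (cross3 b c) / |dot3 a (cross3 b c)| * norm3 c) • b := by
  simp only [norm3, dot3_eq_dotProduct, cross3_eq_crossProduct] at *
  have hba : b ⬝ᵥ b = a ⬝ᵥ a :=
    ((Real.sqrt_inj (dotProduct_self_nonneg a) (dotProduct_self_nonneg b)).1 hn).symm
  have ha : a ⬝ᵥ a ≠ 0 := by
    intro ha
    rw [dotProduct_self_eq_zero.1 ha, zero_dotProduct] at hh
    exact hh rfl
  rw [← div_dotProduct_self_eq_sign_mul_sqrt hab hac hbc hba hh]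
  refine ⟨cross_eq_smul_of_orthogonal hab hac ha, ?_⟩
  rw [triple_product_permutation, ← hba]
  exact cross_eq_smul_of_orthogonal hbc (by rwa [dotProduct_comm]) (hba ▸ ha)

section VectorCalculus

variable {x : R3}

theorem pd_congr {f g : R3 → ℝ} (h : f =ᶠ[𝓝 x] g) (i : Fin 3) : pd i f x = pd i g x := by
  rw [pd, pd, h.fderiv_eq]

theorem curl3_congr {v w : R3 → R3} (h : v =ᶠ[𝓝 x] w) : curl3 v x = curl3 w x := by
  have hc : ∀ j : Fin 3, (fun y => v y j) =ᶠ[𝓝 x] fun y => w y j := fun j =>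
    h.mono fun y hy => congrFun hy j
  simp only [curl3, pd_congr (hc _)]

theorem pd_add {f g : R3 → ℝ} (hf : DifferentiableAt ℝ f x) (hg : DifferentiableAt ℝ g x)
    (i : Fin 3) : pd i (fun y => f y + g y) x = pd i f x + pd i g x := by
  simp [pd, fderiv_fun_add hf hg]

theorem pd_mul {f g : R3 → ℝ} (hf : DifferentiableAt ℝ f x) (hg : DifferentiableAt ℝ g x)
    (i : Fin 3) : pd i (fun y => f y * g y) x = f x * pd i g x + g x * pd i f x := by
  simp [pd, fderiv_fun_mul hf hg]

theorem curl3_add {v w : R3 → R3} (hv : DifferentiableAt ℝ v x) (hw : DifferentiableAt ℝ w x) :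
    curl3 (fun y => v y + w y) x = curl3 v x + curl3 w x := by
  have hv' := differentiableAt_pi.1 hv
  have hw' := differentiableAt_pi.1 hw
  simp only [curl3, Pi.add_apply, pd_add (hv' _) (hw' _), vec3_add]
  exact vec3_eq (by ring) (by ring) (by ring)

theorem hasFDerivAt_pd {u : R3 → ℝ} (hu : ContDiffAt ℝ 2 u x) (j : Fin 3) :
    HasFDerivAt (pd j u) ((fderiv ℝ (fderiv ℝ u) x).flip (Pi.single j 1)) x := by
  have h2 : HasFDerivAt (fderiv ℝ u) (fderiv ℝ (fderiv ℝ u) x) x :=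
    ((hu.fderiv_right (m := 1) (by norm_num)).differentiableAt (by norm_num)).hasFDerivAt
  have h := h2.clm_apply (hasFDerivAt_const (Pi.single j 1 : R3) x)
  rw [ContinuousLinearMap.comp_zero, zero_add] at h
  exact h

theorem differentiableAt_pd {u : R3 → ℝ} (hu : ContDiffAt ℝ 2 u x) (j : Fin 3) :
    DifferentiableAt ℝ (pd j u) x :=
  (hasFDerivAt_pd hu j).differentiableAt

theorem pd_pd_comm {u : R3 → ℝ} (hu : ContDiffAt ℝ 2 u x) (i j : Fin 3) :
    pd i (pd j u) x = pd j (pd i u) x := by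
  rw [pd, pd, (hasFDerivAt_pd hu j).fderiv, (hasFDerivAt_pd hu i).fderiv]
  exact hu.isSymmSndFDerivAt (by simp) _ _

theorem differentiableAt_grad3 {u : R3 → ℝ} (hu : ContDiffAt ℝ 2 u x) :
    DifferentiableAt ℝ (grad3 u) x :=
  differentiableAt_pi.2 (differentiableAt_pd hu)

theorem grad3_comp {g : ℝ → ℝ} {g' : ℝ} {θ : R3 → ℝ} (hg : HasDerivAt g g' (θ x))
    (hθ : DifferentiableAt ℝ θ x) : grad3 (fun y => g (θ y)) x = g' • grad3 θ x := by
  have h : HasFDerivAt (fun y => g (θ y)) (g' • fderiv ℝ θ x) x :=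
    hg.comp_hasFDerivAt x hθ.hasFDerivAt
  ext i
  simp [grad3, pd, h.fderiv]

theorem curl3_smul_grad3 {φ u : R3 → ℝ} (hφ : DifferentiableAt ℝ φ x) (hu : ContDiffAt ℝ 2 u x) :
    curl3 (fun y => φ y • grad3 u y) x = cross3 (grad3 φ x) (grad3 u x) := by
  have hcomp : ∀ j i : Fin 3, pd i (fun y => (φ y • grad3 u y) j) x
      = φ x * pd i (pd j u) x + pd j u x * pd i φ x := fun j i =>
    pd_mul hφ (differentiableAt_pd hu j) i
  simp only [curl3, hcomp, cross3, grad3, pd_pd_comm hu 2 1, pd_pd_comm hu 0 2,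
    pd_pd_comm hu 1 0]
  exact vec3_eq (by ring) (by ring) (by ring)

theorem curl3_eq_of_eventuallyEq_angle_combination {a b : ℝ → ℝ} {a' b' : ℝ}
    {θ ψ ℓ : R3 → ℝ} {w : R3 → R3}
    (hw : w =ᶠ[𝓝 x] fun y => a (θ y) • grad3 ψ y + b (θ y) • grad3 ℓ y)
    (ha : HasDerivAt a a' (θ x)) (hb : HasDerivAt b b' (θ x)) (hθ : DifferentiableAt ℝ θ x)
    (hψ : ContDiffAt ℝ 2 ψ x) (hℓ : ContDiffAt ℝ 2 ℓ x) :
    curl3 w x = a' • cross3 (grad3 θ x) (grad3 ψ x) + b' • cross3 (grad3 θ x) (grad3 ℓ x) := by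
  have ha' : DifferentiableAt ℝ (fun y => a (θ y)) x := ha.differentiableAt.comp x hθ
  have hb' : DifferentiableAt ℝ (fun y => b (θ y)) x := hb.differentiableAt.comp x hθ
  rw [curl3_congr hw, curl3_add (ha'.fun_smul (differentiableAt_grad3 hψ))
    (hb'.fun_smul (differentiableAt_grad3 hℓ)), curl3_smul_grad3 ha' hψ, curl3_smul_grad3 hb' hℓ,
    grad3_comp ha hθ, grad3_comp hb hθ]
  simp only [cross3_eq_crossProduct, map_smul, LinearMap.smul_apply]

end VectorCalculus

theorem beltrami_construction_antiderivative_general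
    (Ω : Set R3) (hΩopen : IsOpen Ω)
    (ℓ ψ θ α : R3 → ℝ)
    (hℓ : ContDiffOn ℝ 2 ℓ Ω) (hψ : ContDiffOn ℝ 2 ψ Ω) (hθ : ContDiffOn ℝ 2 θ Ω)
    (horth1 : ∀ x ∈ Ω, dot3 (grad3 ℓ x) (grad3 ψ x) = 0)
    (horth2 : ∀ x ∈ Ω, dot3 (grad3 ℓ x) (grad3 θ x) = 0)
    (horth3 : ∀ x ∈ Ω, dot3 (grad3 ψ x) (grad3 θ x) = 0)
    (hjac : ∀ x ∈ Ω, dot3 (grad3 ℓ x) (cross3 (grad3 ψ x) (grad3 θ x)) ≠ 0)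
    (hnorm : ∀ x ∈ Ω, norm3 (grad3 ℓ x) = norm3 (grad3 ψ x))
    (heik : ∀ x ∈ Ω, norm3 (grad3 θ x) = |α x|)
    (f F : ℝ → ℝ) (hF : ∀ t, HasDerivAt F (f t) t)
    (w wstar : R3 → R3)
    (hw : ∀ x ∈ Ω,
      w x = Real.cos (F (θ x)) • grad3 ψ x + Real.sin (F (θ x)) • grad3 ℓ x)
    (hwstar : ∀ x ∈ Ω,
      wstar x = Real.sin (F (θ x)) • grad3 ψ x + Real.cos (F (θ x)) • grad3 ℓ x) :
    ∀ x ∈ Ω,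
      curl3 w x =
        ((dot3 (grad3 ℓ x) (cross3 (grad3 ψ x) (grad3 θ x)) /
            |dot3 (grad3 ℓ x) (cross3 (grad3 ψ x) (grad3 θ x))|) * |α x| * f (θ x)) • w x ∧
      curl3 wstar x =
        (-((dot3 (grad3 ℓ x) (cross3 (grad3 ψ x) (grad3 θ x)) /
            |dot3 (grad3 ℓ x) (cross3 (grad3 ψ x) (grad3 θ x))|) * |α x| * f (θ x))) •
          wstar x := by
  intro x hx
  have hΩx : Ω ∈ 𝓝 x := hΩopen.mem_nhds hx
  have hθx : DifferentiableAt ℝ θ x := (hθ.contDiffAt hΩx).differentiableAt (by norm_num)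
  obtain ⟨hψθ, hθℓ⟩ := cross3_eq_smul_of_orthogonal (horth1 x hx) (horth2 x hx) (horth3 x hx)
    (hnorm x hx) (hjac x hx)
  rw [heik x hx] at hψθ hθℓ
  set k := dot3 (grad3 ℓ x) (cross3 (grad3 ψ x) (grad3 θ x)) /
    |dot3 (grad3 ℓ x) (cross3 (grad3 ψ x) (grad3 θ x))| * |α x|
  have hcos := (Real.hasDerivAt_cos (F (θ x))).comp (θ x) (hF (θ x))
  have hsin := (Real.hasDerivAt_sin (F (θ x))).comp (θ x) (hF (θ x))
  have hcurl := fun {a b : ℝ → ℝ} {a' b' : ℝ} {v : R3 → R3}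
      (hv : ∀ y ∈ Ω, v y = a (θ y) • grad3 ψ y + b (θ y) • grad3 ℓ y)
      (ha : HasDerivAt a a' (θ x)) (hb : HasDerivAt b b' (θ x)) =>
    curl3_eq_of_eventuallyEq_angle_combination (eventually_of_mem hΩx hv) ha hb hθx
      (hψ.contDiffAt hΩx) (hℓ.contDiffAt hΩx)
  constructor
  · rw [hcurl hw hcos hsin, cross3_anticomm, hψθ, hθℓ, hw x hx]
    module
  · rw [hcurl hwstar hsin hcos, cross3_anticomm, hψθ, hθℓ, hwstar x hx]
    module

/-- Generalized construction of Beltrami fields with an antiderivative `F` of `f`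
as the angle variable. -/
theorem beltrami_construction_antiderivative
    (Ω : Set R3) (hΩopen : IsOpen Ω) (hΩbdd : Bornology.IsBounded Ω)
    (ℓ ψ θ α : R3 → ℝ)
    (hℓ : ContDiffOn ℝ 2 ℓ Ω) (hψ : ContDiffOn ℝ 2 ψ Ω) (hθ : ContDiffOn ℝ 2 θ Ω)
    (hα : ContinuousOn α Ω)
    (horth1 : ∀ x ∈ Ω, dot3 (grad3 ℓ x) (grad3 ψ x) = 0)
    (horth2 : ∀ x ∈ Ω, dot3 (grad3 ℓ x) (grad3 θ x) = 0)
    (horth3 : ∀ x ∈ Ω, dot3 (grad3 ψ x) (grad3 θ x) = 0)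
    (hjac : ∀ x ∈ Ω, dot3 (grad3 ℓ x) (cross3 (grad3 ψ x) (grad3 θ x)) ≠ 0)
    (hnorm : ∀ x ∈ Ω, norm3 (grad3 ℓ x) = norm3 (grad3 ψ x))
    (heik : ∀ x ∈ Ω, norm3 (grad3 θ x) = |α x|)
    (f F : ℝ → ℝ) (hf : Continuous f) (hF : ∀ t, HasDerivAt F (f t) t)
    (w wstar : R3 → R3)
    (hw : ∀ x ∈ Ω,
      w x = Real.cos (F (θ x)) • grad3 ψ x + Real.sin (F (θ x)) • grad3 ℓ x)
    (hwstar : ∀ x ∈ Ω,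
      wstar x = Real.sin (F (θ x)) • grad3 ψ x + Real.cos (F (θ x)) • grad3 ℓ x) :
    ∀ x ∈ Ω,
      curl3 w x =
        ((dot3 (grad3 ℓ x) (cross3 (grad3 ψ x) (grad3 θ x)) /
            |dot3 (grad3 ℓ x) (cross3 (grad3 ψ x) (grad3 θ x))|) * |α x| * f (θ x)) • w x ∧
      curl3 wstar x =
        (-((dot3 (grad3 ℓ x) (cross3 (grad3 ψ x) (grad3 θ x)) /
            |dot3 (grad3 ℓ x) (cross3 (grad3 ψ x) (grad3 θ x))|) * |α x| * f (θ x))) •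
          wstar x :=
  beltrami_construction_antiderivative_general Ω hΩopen ℓ ψ θ α hℓ hψ hθ horth1 horth2 horth3 hjac
    hnorm heik f F hF w wstar hw hwstar
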